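/- Let γ > 0 and let f : [0,1] → ℝ be γ-Hölder continuous. Then ‖f‖_∞ ≤ 2 max{ ‖f‖_{L²}, ‖f‖_{L²}^{2γ/(2γ+1)} ‖f‖_γ^{1/(2γ+1)} }, where ‖f‖_∞ is the supremum norm on [0,1], ‖f‖_{L²} = (∫_0^1 f(t)² dt)^{1/2}, and ‖f‖_γ = sup_{0≤s<t≤1} |f(t)−f(s)|/|t−s|^γ + ‖f‖_∞ is the γ-Hölder norm. -/

import Mathlib

open MeasureTheory Set Filter Topology

/-!
Let `|f|` attain its maximum `M` at `x`. As long as `K δ ^ γ ≤ M / 2`, Hölder continuity keeps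
`|f| ≥ M / 2` on the points of `[0,1]` within distance `δ` of `x`, a set of length at least `δ`, so
`(M / 2) ^ 2 δ ≤ ‖f‖²_{L²}`. Taking `δ = 1` when `K ≤ M / 2` and `δ = (M / 2K) ^ (1 / γ)` otherwise
gives the two terms of the maximum.
-/

theorem continuousOn_of_dist_le_mul_rpow {X Y : Type*} [PseudoMetricSpace X]
    [PseudoMetricSpace Y] {f : X → Y} {s : Set X} {K γ : ℝ} (hγ : 0 < γ)
    (hf : ∀ x ∈ s, ∀ y ∈ s, dist (f y) (f x) ≤ K * dist y x ^ γ) : ContinuousOn f s := by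
  intro x hx
  have hbound : Tendsto (fun y => K * dist y x ^ γ) (𝓝[s] x) (𝓝 0) := by
    have hcont : Continuous fun y => K * dist y x ^ γ :=
      continuous_const.mul ((continuous_id.dist continuous_const).rpow_const fun _ => Or.inr hγ.le)
    simpa [Real.zero_rpow hγ.ne'] using (hcont.tendsto x).mono_left nhdsWithin_le_nhds
  exact tendsto_iff_dist_tendsto_zero.2 <| squeeze_zero' (Eventually.of_forall fun _ => dist_nonneg)
    (eventually_nhdsWithin_of_forall fun y hy => hf x hx y hy) hbound

theorem ofReal_le_volume_Icc_inter_closedBall {x δ : ℝ} (hx : x ∈ Icc (0 : ℝ) 1)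
    (hδ : δ ∈ Icc (0 : ℝ) 1) : ENNReal.ofReal δ ≤ volume (Icc 0 1 ∩ Metric.closedBall x δ) := by
  rw [Real.closedBall_eq_Icc, Icc_inter_Icc, Real.volume_Icc]
  refine ENNReal.ofReal_le_ofReal ?_
  obtain ⟨hx0, hx1⟩ := hx
  obtain ⟨hδ0, hδ1⟩ := hδ
  rcases max_cases 0 (x - δ) with ⟨h, _⟩ | ⟨h, _⟩ <;>
    rcases min_cases 1 (x + δ) with ⟨h', _⟩ | ⟨h', _⟩ <;> rw [h, h'] <;> linarith

theorem sq_mul_le_setIntegral_sq {f : ℝ → ℝ} {x δ m : ℝ}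
    (hf : IntegrableOn (fun t => f t ^ 2) (Icc 0 1)) (hx : x ∈ Icc (0 : ℝ) 1)
    (hδ : δ ∈ Icc (0 : ℝ) 1) (hm : 0 ≤ m)
    (hlow : ∀ t ∈ Icc (0 : ℝ) 1, |t - x| ≤ δ → m ≤ |f t|) :
    m ^ 2 * δ ≤ ∫ t in Icc 0 1, f t ^ 2 := by
  set S := Icc 0 1 ∩ Metric.closedBall x δ
  have hSfin : volume S ≠ ⊤ := (measure_mono inter_subset_left).trans_lt measure_Icc_lt_top |>.ne
  calc m ^ 2 * δ ≤ m ^ 2 * volume.real S := by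
        gcongr
        exact (ENNReal.ofReal_le_iff_le_toReal hSfin).1
          (ofReal_le_volume_Icc_inter_closedBall hx hδ)
    _ = ∫ _ in S, m ^ 2 := by rw [setIntegral_const, smul_eq_mul, mul_comm]
    _ ≤ ∫ t in S, f t ^ 2 := by
        refine setIntegral_mono_on (integrableOn_const hSfin) (hf.mono_set inter_subset_left)
          (measurableSet_Icc.inter Metric.isClosed_closedBall.measurableSet) fun t ht => ?_
        rw [← sq_abs (f t)]
        exact pow_le_pow_left₀ hm (hlow t ht.1 (Real.dist_eq t x ▸ ht.2)) 2
    _ ≤ ∫ t in Icc 0 1, f t ^ 2 :=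
        setIntegral_mono_set hf (Eventually.of_forall fun t => sq_nonneg _)
          inter_subset_left.eventuallyLE

theorem rpow_two_mul_add_one_le_of_sq_mul_le {a K I γ : ℝ} (ha : 0 ≤ a) (hK : 0 < K)
    (hγ : 0 < γ) (h : a ^ 2 * (a / K) ^ (1 / γ) ≤ I) : a ^ (2 * γ + 1) ≤ I ^ γ * K := by
  have hδγ : ((a / K) ^ (1 / γ)) ^ γ = a / K := by
    rw [← Real.rpow_mul (by positivity), one_div_mul_cancel hγ.ne', Real.rpow_one]
  calc a ^ (2 * γ + 1) = (a ^ 2 * (a / K) ^ (1 / γ)) ^ γ * K := by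
        rw [Real.mul_rpow (by positivity) (by positivity), hδγ, ← Real.rpow_natCast,
          ← Real.rpow_mul ha, Real.rpow_add' ha (by positivity), Real.rpow_one]
        field_simp
        push_cast
        ring_nf
    _ ≤ I ^ γ * K := by gcongr

theorem le_max_sqrt_of_forall_sq_mul_le {a K I γ : ℝ} (ha : 0 ≤ a) (hγ : 0 < γ)
    (h : ∀ δ ∈ Icc (0 : ℝ) 1, K * δ ^ γ ≤ a → a ^ 2 * δ ≤ I) :
    a ≤ max √I (√I ^ (2 * γ / (2 * γ + 1)) * K ^ (1 / (2 * γ + 1))) := by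
  rcases le_or_gt K a with hKa | haK
  · refine le_max_of_le_left (Real.le_sqrt_of_sq_le ?_)
    simpa using h 1 (right_mem_Icc.2 zero_le_one) (by simpa using hKa)
  · have hK : 0 < K := ha.trans_lt haK
    set δ := (a / K) ^ (1 / γ)
    have hδγ : K * δ ^ γ = a := by
      rw [← Real.rpow_mul (by positivity), one_div_mul_cancel hγ.ne', Real.rpow_one]
      field_simp
    have hδ : δ ∈ Icc (0 : ℝ) 1 :=
      ⟨by positivity, Real.rpow_le_one (by positivity) ((div_le_one hK).2 haK.le) (by positivity)⟩
    have hI : 0 ≤ I := (by positivity : 0 ≤ a ^ 2 * δ).trans (h δ hδ hδγ.le)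
    refine le_max_of_le_right ?_
    calc a = (a ^ (2 * γ + 1)) ^ (2 * γ + 1)⁻¹ := (Real.rpow_rpow_inv ha (by positivity)).symm
      _ ≤ (I ^ γ * K) ^ (2 * γ + 1)⁻¹ := by
          gcongr
          exact rpow_two_mul_add_one_le_of_sq_mul_le ha hK hγ (h δ hδ hδγ.le)
      _ = √I ^ (2 * γ / (2 * γ + 1)) * K ^ (1 / (2 * γ + 1)) := by
          rw [Real.mul_rpow (by positivity) hK.le, Real.sqrt_eq_rpow, ← Real.rpow_mul hI,
            ← Real.rpow_mul hI]
          ring_nf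

theorem half_abs_sq_mul_le_integral_sq_of_holder {f : ℝ → ℝ} {K γ δ x : ℝ} (hγ : 0 ≤ γ)
    (hK : 0 ≤ K) (hf : ∀ s ∈ Icc (0 : ℝ) 1, ∀ t ∈ Icc (0 : ℝ) 1, |f t - f s| ≤ K * |t - s| ^ γ)
    (hint : IntegrableOn (fun t => f t ^ 2) (Icc 0 1)) (hx : x ∈ Icc (0 : ℝ) 1)
    (hδ : δ ∈ Icc (0 : ℝ) 1) (hKδ : K * δ ^ γ ≤ |f x| / 2) :
    (|f x| / 2) ^ 2 * δ ≤ ∫ t in Icc 0 1, f t ^ 2 := by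
  refine sq_mul_le_setIntegral_sq hint hx hδ (by positivity) fun t ht htx => ?_
  have hdiff : |f t - f x| ≤ K * δ ^ γ := (hf x hx t ht).trans (by gcongr)
  have hrev : |f x| - |f t| ≤ |f t - f x| := abs_sub_comm (f x) (f t) ▸ abs_sub_abs_le_abs_sub _ _
  linarith

/-- `K + ‖f‖_∞` stands for `‖f‖_γ`: the bound for every admissible Hölder constant `K` is
equivalent to the bound with the Hölder seminorm. -/
theorem sup_le_L2_holder_interpolation
    (γ : ℝ) (hγ : 0 < γ) (f : ℝ → ℝ) (K : ℝ) (hK : 0 ≤ K)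
    (hf : ∀ s ∈ Set.Icc (0:ℝ) 1, ∀ t ∈ Set.Icc (0:ℝ) 1, |f t - f s| ≤ K * |t - s| ^ γ) :
    (⨆ t : Set.Icc (0:ℝ) 1, |f (t:ℝ)|) ≤
      2 * max (Real.sqrt (∫ t in Set.Icc (0:ℝ) 1, (f t) ^ 2))
        ((Real.sqrt (∫ t in Set.Icc (0:ℝ) 1, (f t) ^ 2)) ^ (2*γ/(2*γ+1)) *
          (K + ⨆ t : Set.Icc (0:ℝ) 1, |f (t:ℝ)|) ^ (1/(2*γ+1))) := by
  have hcont : ContinuousOn f (Icc 0 1) :=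
    continuousOn_of_dist_le_mul_rpow hγ (by simpa only [Real.dist_eq] using hf)
  obtain ⟨x, hx, hmax⟩ := isCompact_Icc.exists_isMaxOn (nonempty_Icc.2 zero_le_one) hcont.abs
  rw [hmax.iSup_eq hx]
  have hhalf : |f x| / 2 ≤ max √(∫ t in Icc 0 1, f t ^ 2)
      (√(∫ t in Icc 0 1, f t ^ 2) ^ (2 * γ / (2 * γ + 1)) * K ^ (1 / (2 * γ + 1))) :=
    le_max_sqrt_of_forall_sq_mul_le (by positivity) hγ fun _ hδ hKδ =>
      half_abs_sq_mul_le_integral_sq_of_holder hγ.le hK hf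
        ((hcont.pow 2).integrableOn_compact isCompact_Icc) hx hδ hKδ
  have hmono : K ^ (1 / (2 * γ + 1)) ≤ (K + |f x|) ^ (1 / (2 * γ + 1)) := by
    gcongr
    exact le_add_of_nonneg_right (abs_nonneg _)
  grw [hmono] at hhalf
  linarith
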